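/- Let k be a field, d ≥ 1 an integer, and let K be a d-dimensional finite simplicial complex that is doubly Cohen–Macaulay over k. Then there exists an integer m ≥ 1 and a minimal d-cycle c with coefficients in the abelian group k^m such that K is the simplicial complex spanned by supp(c); that is, K is a minimal d-cycle complex over the abelian group k^m. -/

import Mathlib

namespace Paper2CM

variable {V : Type*} [Fintype V] [LinearOrder V]

/-- `sign(t,T) = (−1)^{|{s ∈ T : s < t}|}`. -/
def signOf (t : V) (T : Finset V) : ℤ := (-1) ^ (T.filter (fun s => s < t)).card

/-- The simplicial boundary operator on formal chains with coefficients in an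
abelian group `A`: `∂c(S) = Σ_{t ∉ S} sign(t, S ∪ {t}) • c(S ∪ {t})`. -/
def bdry {A : Type*} [AddCommGroup A] (c : Finset V → A) : Finset V → A :=
  fun S => ∑ t ∈ Sᶜ, signOf t (insert t S) • c (insert t S)

/-- A chain of degree `n - 1`, i.e. supported on sets of cardinality `n`. -/
def IsSimpChain {A : Type*} [AddCommGroup A] (n : ℕ) (c : Finset V → A) : Prop :=
  ∀ T, c T ≠ 0 → T.card = n

/-- `c'` is a subchain of `c`: each coefficient of `c'` agrees with that of `c` or is `0`. -/
def Subchain {A : Type*} [AddCommGroup A] (c' c : Finset V → A) : Prop :=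
  ∀ T, c' T = c T ∨ c' T = 0

/-- A minimal cycle supported on sets of cardinality `n` (so of dimension `n - 1`):
a nonzero cycle whose only subchains that are cycles are `0` and itself. -/
def IsMinimalCycle {A : Type*} [AddCommGroup A] (n : ℕ) (c : Finset V → A) : Prop :=
  c ≠ 0 ∧ IsSimpChain n c ∧ bdry c = 0 ∧
    ∀ c', Subchain c' c → bdry c' = 0 → c' = 0 ∨ c' = c

/-- The simplicial complex spanned by the support of a chain. -/
def spannedComplex {A : Type*} [AddCommGroup A] (c : Finset V → A) : Set (Finset V) :=
  {S | ∃ T, c T ≠ 0 ∧ S ⊆ T}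

/-- A (finite) simplicial complex on vertex type `V`: a collection of finite subsets
closed under taking subsets, containing the empty set. -/
def IsComplex (K : Set (Finset V)) : Prop :=
  ∅ ∈ K ∧ ∀ S ∈ K, ∀ T, T ⊆ S → T ∈ K

/-- The link of a face: `lk_L(T) = {S ∈ L : S ∩ T = ∅, S ∪ T ∈ L}`. -/
def cxLink (L : Set (Finset V)) (T : Finset V) : Set (Finset V) :=
  {S | S ∈ L ∧ Disjoint S T ∧ S ∪ T ∈ L}

/-- A pure complex: every face is contained in a face of maximal cardinality. -/
def IsPure (L : Set (Finset V)) : Prop :=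
  ∀ S ∈ L, ∃ F ∈ L, S ⊆ F ∧ ∀ G ∈ L, G.card ≤ F.card

/-- A chain of the complex `L` supported on faces of `L` of cardinality `n`. -/
def IsChainOn (k : Type*) [Field k] (L : Set (Finset V)) (n : ℕ) (c : Finset V → k) : Prop :=
  ∀ T, c T ≠ 0 → T ∈ L ∧ T.card = n

/-- Vanishing of the reduced homology `H̃_{n-1}(L; k)`: every cycle supported on
cardinality-`n` faces of `L` is the boundary of a chain on cardinality-`(n+1)` faces of `L`. -/
def HomologyVanishes (k : Type*) [Field k] (L : Set (Finset V)) (n : ℕ) : Prop :=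
  ∀ c : Finset V → k, IsChainOn k L n c → bdry c = 0 →
    ∃ b : Finset V → k, IsChainOn k L (n + 1) b ∧ bdry b = c

/-- Cohen–Macaulay over `k` via Reisner's criterion: `L` is pure and for every face
`T ∈ L` and every `i < dim lk_L(T)`, `H̃_i(lk_L(T); k) = 0` (here `i = n - 1`, and
`i < dim lk_L(T)` is expressed as: the link has a face of cardinality `> n`). -/
def IsCM (k : Type*) [Field k] (L : Set (Finset V)) : Prop :=
  IsPure L ∧ ∀ T ∈ L, ∀ n : ℕ, (∃ F ∈ cxLink L T, n < F.card) →
    HomologyVanishes k (cxLink L T) n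

/-- Doubly Cohen–Macaulay over `k`: `K` is CM and for every vertex `v` of `K`,
`K − v` is CM of the same dimension as `K` (same maximal cardinality of a face). -/
def Is2CM (k : Type*) [Field k] (K : Set (Finset V)) : Prop :=
  IsCM k K ∧ ∀ v : V, ({v} : Finset V) ∈ K →
    IsCM k {S | S ∈ K ∧ v ∉ S} ∧
    ∀ S ∈ K, ∃ F ∈ K, v ∉ F ∧ S.card ≤ F.card


section Aux
set_option linter.unusedSectionVars false

variable (k : Type*) [Field k]

lemma signOf_insert (v t : V) (S : Finset V) (h : t ∉ S) :
    signOf v (insert t S) = (if t < v then -1 else 1) * signOf v S := by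
  unfold signOf
  rw [Finset.filter_insert]
  by_cases htv : t < v
  · rw [if_pos htv, if_pos htv, Finset.card_insert_of_notMem (by simp [h]), pow_succ]
    ring
  · rw [if_neg htv, if_neg htv, one_mul]

lemma signOf_mul_self (v : V) (T : Finset V) : signOf v T * signOf v T = 1 := by
  unfold signOf
  rw [← mul_pow]
  norm_num

lemma signOf_smul_smul {M : Type*} [AddCommGroup M] (v : V) (T : Finset V) (x : M) :
    signOf v T • signOf v T • x = x := by
  rw [smul_smul, signOf_mul_self, one_smul]

lemma signOf_smul_ne_zero (v : V) (T : Finset V) (x : k) (hx : x ≠ 0) :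
    signOf v T • x ≠ 0 := by
  intro h
  exact hx (by rw [← signOf_smul_smul (M := k) v T x, h, smul_zero])

lemma bdry_apply {M : Type*} [AddCommGroup M] (c : Finset V → M) (S : Finset V) :
    bdry c S = ∑ t ∈ Sᶜ, signOf t (insert t S) • c (insert t S) := rfl

lemma signOf_self_singleton (t : V) : signOf t (insert t (∅ : Finset V)) = 1 := by
  unfold signOf
  rw [Finset.filter_insert, if_neg (lt_irrefl t)]
  simp

lemma bdry_empty (c : Finset V → k) : bdry c ∅ = ∑ t : V, c {t} := by
  rw [bdry_apply, Finset.compl_empty]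
  refine Finset.sum_congr rfl fun t _ => ?_
  rw [signOf_self_singleton, one_smul]
  norm_num

lemma bdry_add {M : Type*} [AddCommGroup M] (c c' : Finset V → M) :
    bdry (c + c') = bdry c + bdry c' := by
  funext S
  simp [bdry_apply, Finset.sum_add_distrib, smul_add]

lemma bdry_sub {M : Type*} [AddCommGroup M] (c c' : Finset V → M) :
    bdry (c - c') = bdry c - bdry c' := by
  funext S
  simp [bdry_apply, Finset.sum_sub_distrib, smul_sub]

lemma bdry_smul (r : k) (c : Finset V → k) : bdry (r • c) = r • bdry c := by
  funext S
  simp only [bdry_apply, Pi.smul_apply, Finset.smul_sum]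
  refine Finset.sum_congr rfl fun t _ => ?_
  rw [smul_comm]

lemma bdry_zero {M : Type*} [AddCommGroup M] : bdry (0 : Finset V → M) = 0 := by
  funext S
  simp [bdry_apply]

lemma bdry_pi {m : ℕ} (c : Finset V → (Fin m → k)) (i : Fin m) :
    bdry (fun T => c T i) = fun S => bdry c S i := by
  funext S
  simp [bdry_apply, Finset.sum_apply]

lemma bdry_bdry {M : Type*} [AddCommGroup M] (c : Finset V → M) :
    bdry (bdry c) = 0 := by
  funext S
  rw [bdry_apply]
  show ∑ t ∈ Sᶜ, signOf t (insert t S) • bdry c (insert t S) = 0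
  have step : ∀ t ∈ Sᶜ,
      signOf t (insert t S) • bdry c (insert t S)
        = ∑ s ∈ Sᶜ, (if s = t then 0 else
            (signOf t (insert t S) * signOf s (insert s (insert t S))) • c (insert s (insert t S))) := by
    intro t ht
    rw [bdry_apply, Finset.smul_sum, Finset.compl_insert]
    rw [← Finset.sum_erase (s := Sᶜ) (a := t)
      (f := fun s => if s = t then 0 else
        (signOf t (insert t S) * signOf s (insert s (insert t S))) • c (insert s (insert t S)))
      (by simp)]
    refine Finset.sum_congr rfl fun s hs => ?_
    have hst : s ≠ t := Finset.ne_of_mem_erase hs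
    rw [if_neg hst, smul_smul]
  rw [Finset.sum_congr rfl step]
  rw [← Finset.sum_product']
  apply Finset.sum_involution (fun p _ => (p.2, p.1))
  · intro ⟨t, s⟩ hp
    simp only
    by_cases hst : s = t
    · subst hst
      simp
    · have hts : ¬ t = s := fun h => hst h.symm
      rw [if_neg hst, if_neg hts]
      have ht : t ∉ S := by simpa using (Finset.mem_product.1 hp).1
      have hs : s ∉ S := by simpa using (Finset.mem_product.1 hp).2
      have e2 : signOf s (insert s (insert t S)) = (if t < s then -1 else 1) * signOf s (insert s S) := by
        rw [Finset.insert_comm s t S]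
        refine signOf_insert s t (insert s S) ?_
        simp only [Finset.mem_insert]
        push_neg
        exact ⟨hts, ht⟩
      have e3 : signOf t (insert t (insert s S)) = (if s < t then -1 else 1) * signOf t (insert t S) := by
        rw [Finset.insert_comm t s S]
        refine signOf_insert t s (insert t S) ?_
        simp only [Finset.mem_insert]
        push_neg
        exact ⟨hst, hs⟩
      have e1 : insert s (insert t S) = insert t (insert s S) := Finset.insert_comm s t S
      rw [e2, e3, e1, ← add_smul]
      convert zero_smul ℤ (c (insert t (insert s S)))
      rcases lt_or_gt_of_ne hst with h | h
      · rw [if_neg (asymm h), if_pos h]; ring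
      · rw [if_pos h, if_neg (asymm h)]; ring
  · intro ⟨t, s⟩ hp h
    by_cases hst : s = t
    · subst hst; simp at h
    · simp only [Prod.mk.injEq, ne_eq, not_and]
      intro h'
      exact absurd h' hst
  · intro p hp
    simp only [Finset.mem_product] at hp ⊢
    exact ⟨hp.2, hp.1⟩
  · intro p hp
    rfl


/-- The cone `v * y` of a chain `y` (which should avoid `v`). -/
def cone (v : V) (y : Finset V → k) : Finset V → k :=
  fun T => if v ∈ T then signOf v T • y (T.erase v) else 0

/-- De-coning: extract the link part of a chain at vertex `v`. -/
def deCone (v : V) (z : Finset V → k) : Finset V → k :=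
  fun S => if v ∈ S then 0 else signOf v (insert v S) • z (insert v S)

lemma bdry_cone (v : V) (y : Finset V → k) (hy : ∀ T, v ∈ T → y T = 0)
    (hcy : bdry y = 0) : bdry (cone k v y) = y := by
  funext S
  rw [bdry_apply]
  by_cases hv : v ∈ S
  · -- terms: t ≠ v, x(insert t S) = sign(v, insert t S) • y (insert t (S.erase v))
    have hSv : insert v (S.erase v) = S := Finset.insert_erase hv
    rw [hy S hv]
    have key : ∀ t ∈ Sᶜ,
        signOf t (insert t S) • cone k v y (insert t S)
          = (-(signOf v S)) • (signOf t (insert t (S.erase v)) • y (insert t (S.erase v))) := by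
      intro t ht
      have htS : t ∉ S := Finset.mem_compl.1 ht
      have htv : t ≠ v := fun h => htS (h ▸ hv)
      have hvins : v ∈ insert t S := Finset.mem_insert_of_mem hv
      have e0 : (insert t S).erase v = insert t (S.erase v) :=
        Finset.erase_insert_of_ne htv
      have e1 : signOf v (insert t S) = (if t < v then -1 else 1) * signOf v S :=
        signOf_insert v t S htS
      have e2 : signOf t (insert t S) = (if v < t then -1 else 1) * signOf t (insert t (S.erase v)) := by
        conv_lhs => rw [← hSv, Finset.insert_comm t v]
        exact signOf_insert t v (insert t (S.erase v))
          (by simp only [Finset.mem_insert]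
              push_neg
              exact ⟨fun h => htv h.symm, Finset.notMem_erase v S⟩)
      show signOf t (insert t S) • (if v ∈ insert t S then
          signOf v (insert t S) • y ((insert t S).erase v) else 0) = _
      rw [if_pos hvins, e0, e1, e2, smul_smul, smul_smul]
      congr 1
      rcases lt_or_gt_of_ne htv with h | h
      · rw [if_neg (asymm h), if_pos h]; ring
      · rw [if_pos h, if_neg (asymm h)]; ring
    rw [Finset.sum_congr rfl key, ← Finset.smul_sum]
    have : ∑ t ∈ Sᶜ, signOf t (insert t (S.erase v)) • y (insert t (S.erase v)) = 0 := by
      have hbd : bdry y (S.erase v) = 0 := by rw [hcy]; rfl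
      rw [bdry_apply] at hbd
      have hcompl : (S.erase v)ᶜ = insert v Sᶜ := by
        rw [← Finset.compl_erase]
      rw [hcompl, Finset.sum_insert (by simp [hv])] at hbd
      rw [hSv] at hbd
      rw [hy S hv, smul_zero, zero_add] at hbd
      exact hbd
    rw [this, smul_zero]
  · -- only the t = v term survives
    have hvc : v ∈ Sᶜ := Finset.mem_compl.2 hv
    rw [Finset.sum_eq_single_of_mem v hvc]
    · show signOf v (insert v S) • (if v ∈ insert v S then
        signOf v (insert v S) • y ((insert v S).erase v) else 0) = y S
      rw [if_pos (Finset.mem_insert_self v S), Finset.erase_insert hv,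
        signOf_smul_smul]
    · intro t _ htv
      show signOf t (insert t S) • (if v ∈ insert t S then
        signOf v (insert t S) • y ((insert t S).erase v) else 0) = 0
      rw [if_neg (show v ∉ insert t S by
        simp only [Finset.mem_insert]
        push_neg
        exact ⟨Ne.symm htv, hv⟩), smul_zero]

lemma bdry_deCone (v : V) (z : Finset V → k) (hz : bdry z = 0) :
    bdry (deCone k v z) = 0 := by
  funext S
  show bdry (deCone k v z) S = (0 : k)
  rw [bdry_apply]
  by_cases hv : v ∈ S
  · refine Finset.sum_eq_zero fun t ht => ?_
    have : v ∈ insert t S := Finset.mem_insert_of_mem hv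
    show signOf t (insert t S) • (if v ∈ insert t S then 0 else _) = 0
    rw [if_pos this, smul_zero]
  · -- relate to bdry z (insert v S) = 0
    have hbd : bdry z (insert v S) = 0 := by rw [hz]; rfl
    rw [bdry_apply, Finset.compl_insert] at hbd
    have key : ∀ t ∈ Sᶜ,
        signOf t (insert t S) • deCone k v z (insert t S)
          = (-(signOf v (insert v S))) • (if t = v then 0 else
              signOf t (insert t (insert v S)) • z (insert t (insert v S))) := by
      intro t ht
      have htS : t ∉ S := Finset.mem_compl.1 ht
      by_cases htv : t = v
      · rw [htv, if_pos rfl, smul_zero]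
        show signOf v (insert v S) • (if v ∈ insert v S then 0 else _) = 0
        rw [if_pos (Finset.mem_insert_self v S), smul_zero]
      · have hvins : v ∉ insert t S := by
          simp only [Finset.mem_insert]
          push_neg
          exact ⟨fun h => htv h.symm, hv⟩
        show signOf t (insert t S) • (if v ∈ insert t S then 0 else
            signOf v (insert v (insert t S)) • z (insert v (insert t S))) = _
        rw [if_neg hvins, if_neg htv]
        have e1 : signOf v (insert v (insert t S)) = (if t < v then -1 else 1) * signOf v (insert v S) := by
          rw [Finset.insert_comm v t]
          exact signOf_insert v t (insert v S)
            (by simp only [Finset.mem_insert]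
                push_neg
                exact ⟨htv, htS⟩)
        have e2 : signOf t (insert t (insert v S)) = (if v < t then -1 else 1) * signOf t (insert t S) := by
          rw [Finset.insert_comm t v]
          exact signOf_insert t v (insert t S)
            (by simp only [Finset.mem_insert]
                push_neg
                exact ⟨fun h => htv h.symm, hv⟩)
        rw [e1, Finset.insert_comm v t, e2, smul_smul, smul_smul]
        congr 1
        rcases lt_or_gt_of_ne htv with h | h
        · rw [if_neg (asymm h), if_pos h]; ring
        · rw [if_pos h, if_neg (asymm h)]; ring
    rw [Finset.sum_congr rfl key, ← Finset.smul_sum]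
    have : ∑ t ∈ Sᶜ, (if t = v then 0 else
        signOf t (insert t (insert v S)) • z (insert t (insert v S))) = 0 := by
      rw [← Finset.sum_erase (s := Sᶜ) (a := v)
        (f := fun t => if t = v then 0 else
          signOf t (insert t (insert v S)) • z (insert t (insert v S))) (by simp)]
      refine Eq.trans (Finset.sum_congr rfl fun t ht => ?_) hbd
      rw [if_neg (Finset.ne_of_mem_erase ht)]
    rw [this, smul_zero]

lemma deCone_cone (v : V) (y : Finset V → k) (hy : ∀ T, v ∈ T → y T = 0) :
    deCone k v (cone k v y) = y := by
  funext S
  by_cases hv : v ∈ S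
  · show (if v ∈ S then 0 else _) = y S
    rw [if_pos hv, hy S hv]
  · show (if v ∈ S then 0 else signOf v (insert v S) • cone k v y (insert v S)) = y S
    rw [if_neg hv]
    show signOf v (insert v S) • (if v ∈ insert v S then
        signOf v (insert v S) • y ((insert v S).erase v) else 0) = y S
    rw [if_pos (Finset.mem_insert_self v S), Finset.erase_insert hv, signOf_smul_smul]

lemma deCone_indicator (v : V) (A : Set (Finset V)) (z : Finset V → k) :
    deCone k v (A.indicator z) = ((fun S => insert v S) ⁻¹' A).indicator (deCone k v z) := by
  funext S
  by_cases hv : v ∈ S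
  · show (if v ∈ S then 0 else _) = _
    rw [if_pos hv]
    by_cases hA : S ∈ (fun S => insert v S) ⁻¹' A
    · rw [Set.indicator_of_mem hA]
      show (0:k) = if v ∈ S then 0 else _
      rw [if_pos hv]
    · rw [Set.indicator_of_notMem hA]
  · show (if v ∈ S then 0 else signOf v (insert v S) • A.indicator z (insert v S)) = _
    rw [if_neg hv]
    by_cases hA : insert v S ∈ A
    · rw [Set.indicator_of_mem hA, Set.indicator_of_mem (by exact hA)]
      show _ = if v ∈ S then 0 else _
      rw [if_neg hv]
    · rw [Set.indicator_of_notMem hA, smul_zero, Set.indicator_of_notMem (by exact hA)]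

/-- Convenient bundle of hypotheses: `K` is a `d`-dimensional 2-CM complex. -/
def Hyp (K : Set (Finset V)) (d : ℕ) : Prop :=
  IsComplex K ∧ (∀ S ∈ K, S.card ≤ d + 1) ∧ (∃ S ∈ K, S.card = d + 1) ∧ Is2CM k K

lemma mem_link {K : Set (Finset V)} {v : V} {S : Finset V} :
    S ∈ cxLink K {v} ↔ S ∈ K ∧ v ∉ S ∧ insert v S ∈ K := by
  unfold cxLink
  rw [Set.mem_setOf_eq, Finset.disjoint_singleton_right]
  constructor
  · rintro ⟨h1, h2, h3⟩
    refine ⟨h1, h2, ?_⟩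
    rwa [Finset.union_comm, ← Finset.insert_eq] at h3
  · rintro ⟨h1, h2, h3⟩
    refine ⟨h1, h2, ?_⟩
    rwa [Finset.union_comm, ← Finset.insert_eq]

lemma link_empty (L : Set (Finset V)) : cxLink L ∅ = L := by
  ext S
  unfold cxLink
  simp

lemma link_link {M : Set (Finset V)} (hM : IsComplex M) {v : V} {T : Finset V}
    (hT : v ∉ T) : cxLink (cxLink M {v}) T = cxLink M (T ∪ {v}) := by
  ext S
  constructor
  · rintro ⟨hS, hST, hSTl⟩
    obtain ⟨hS1, hS2, hS3⟩ := mem_link.1 hS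
    obtain ⟨hST1, hST2, hST3⟩ := hSTl
    refine ⟨hS1, ?_, ?_⟩
    · rw [Finset.disjoint_union_right]
      exact ⟨hST, Finset.disjoint_singleton_right.2 hS2⟩
    · rw [← Finset.union_assoc]
      exact hST3
  · rintro ⟨hS1, hdisj, hmem⟩
    rw [Finset.disjoint_union_right, Finset.disjoint_singleton_right] at hdisj
    obtain ⟨hdT, hdv⟩ := hdisj
    rw [← Finset.union_assoc] at hmem
    refine ⟨mem_link.2 ⟨hS1, hdv, ?_⟩, hdT, mem_link.2 ⟨?_, ?_, ?_⟩⟩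
    · refine hM.2 _ hmem _ ?_
      intro x hx
      rcases Finset.mem_insert.1 hx with h | h
      · exact Finset.mem_union_right _ (Finset.mem_singleton.2 h)
      · exact Finset.mem_union_left _ (Finset.mem_union_left _ h)
    · exact hM.2 _ hmem _ Finset.subset_union_left
    · simp [hdv, hT]
    · rw [Finset.insert_eq, Finset.union_comm]
      exact hmem

lemma exists_facet {K : Set (Finset V)} {d : ℕ} (h : Hyp k K d) {S : Finset V}
    (hS : S ∈ K) : ∃ F ∈ K, S ⊆ F ∧ F.card = d + 1 := by
  obtain ⟨hK, hb, ⟨S₀, hS₀, hc₀⟩, h2⟩ := h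
  obtain ⟨F, hF, hSF, hmax⟩ := h2.1.1 S hS
  exact ⟨F, hF, hSF, le_antisymm (hb F hF) (hc₀ ▸ hmax S₀ hS₀)⟩

lemma isComplex_link {K : Set (Finset V)} (hK : IsComplex K) (v : V) (hv : ({v} : Finset V) ∈ K) :
    IsComplex (cxLink K {v}) := by
  constructor
  · rw [mem_link]
    exact ⟨hK.1, by simp, by simpa using hv⟩
  · intro S hS T hTS
    rw [mem_link] at *
    obtain ⟨h1, h2, h3⟩ := hS
    exact ⟨hK.2 S h1 T hTS, fun h => h2 (hTS h),
      hK.2 _ h3 _ (Finset.insert_subset_insert v hTS)⟩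

lemma isComplex_minus {K : Set (Finset V)} (hK : IsComplex K) (v : V) :
    IsComplex {S | S ∈ K ∧ v ∉ S} := by
  constructor
  · exact ⟨hK.1, by simp⟩
  · rintro S ⟨hS, hvS⟩ T hTS
    exact ⟨hK.2 S hS T hTS, fun h => hvS (hTS h)⟩

lemma union_singleton (T : Finset V) (v : V) : T ∪ {v} = insert v T := by
  rw [Finset.union_comm, ← Finset.insert_eq]

lemma link_hyp {K : Set (Finset V)} {d : ℕ} (h : Hyp k K (d + 1)) {v : V}
    (hv : ({v} : Finset V) ∈ K) : Hyp k (cxLink K {v}) d := by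
  obtain ⟨hK, hb, hex, h2⟩ := h
  have hfacets : ∀ S ∈ K, ∃ F ∈ K, S ⊆ F ∧ F.card = d + 2 :=
    fun S hS => exists_facet k ⟨hK, hb, hex, h2⟩ hS
  set L := cxLink K {v} with hL
  have hbound : ∀ S ∈ L, S.card ≤ d + 1 := by
    intro S hS
    obtain ⟨h1, h2', h3⟩ := mem_link.1 hS
    have := hb _ h3
    rwa [Finset.card_insert_of_notMem h2', Nat.add_le_add_iff_right] at this
  have hLfacet : ∀ S ∈ L, ∃ F ∈ L, S ⊆ F ∧ F.card = d + 1 := by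
    intro S hS
    obtain ⟨h1, h2', h3⟩ := mem_link.1 hS
    obtain ⟨F, hF, hsub, hcard⟩ := hfacets _ h3
    have hvF : v ∈ F := hsub (Finset.mem_insert_self v S)
    refine ⟨F.erase v, mem_link.2 ⟨hK.2 F hF _ (Finset.erase_subset v F), Finset.notMem_erase v F,
      by rwa [Finset.insert_erase hvF]⟩, ?_, ?_⟩
    · exact Finset.subset_erase.2 ⟨(Finset.subset_insert v S).trans hsub, h2'⟩
    · rw [Finset.card_erase_of_mem hvF, hcard]
      rfl
  refine ⟨isComplex_link hK v hv, hbound, ?_, ?_, ?_⟩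
  · -- existence of a d+1 card face in L
    obtain ⟨F, hF, _, hcard⟩ := hLfacet ∅ (isComplex_link hK v hv).1
    exact ⟨F, hF, hcard⟩
  · -- IsCM L
    constructor
    · intro S hS
      obtain ⟨F, hF, hsub, hcard⟩ := hLfacet S hS
      exact ⟨F, hF, hsub, fun G hG => hcard ▸ hbound G hG⟩
    · intro T hT n hside
      have hvT : v ∉ T := (mem_link.1 hT).2.1
      have hTv : insert v T ∈ K := (mem_link.1 hT).2.2
      rw [link_link hK hvT, union_singleton] at hside ⊢
      exact h2.1.2 (insert v T) hTv n hside
  · -- vertex condition for L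
    intro w hw
    obtain ⟨hwK, hwv', hwvK⟩ := mem_link.1 hw
    have hwv : w ≠ v := fun h => hwv' (h ▸ Finset.mem_singleton_self w)
    obtain ⟨hKw, hsz⟩ := h2.2 w hwK
    set Kw := {S | S ∈ K ∧ w ∉ S} with hKwdef
    have hKwC : IsComplex Kw := isComplex_minus hK w
    -- Kw has a face of card d+2
    obtain ⟨S₀, hS₀, hc₀⟩ := hex
    obtain ⟨F₀, hF₀, hwF₀, hcF₀⟩ := hsz S₀ hS₀
    have hcF₀' : F₀.card = d + 2 := le_antisymm (hb _ hF₀) (hc₀ ▸ hcF₀)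
    have hF₀w : F₀ ∈ Kw := ⟨hF₀, hwF₀⟩
    -- facets of Kw have card d+2, and every face of Kw is in such a facet containing it
    have hKwfacet : ∀ S ∈ Kw, ∃ F ∈ Kw, S ⊆ F ∧ F.card = d + 2 := by
      intro S hS
      obtain ⟨F, hF, hsub, hmax⟩ := hKw.1 S hS
      exact ⟨F, hF, hsub, le_antisymm (hb _ hF.1) (hcF₀' ▸ hmax F₀ hF₀w)⟩
    have hvKw : ({v} : Finset V) ∈ Kw := ⟨hv, by simp only [Finset.mem_singleton]; exact hwv⟩
    -- the key set identity
    have hsetid : {S | S ∈ L ∧ w ∉ S} = cxLink Kw {v} := by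
      ext S
      constructor
      · rintro ⟨hSL, hSw⟩
        obtain ⟨h1, h2', h3⟩ := mem_link.1 hSL
        exact mem_link.2 ⟨⟨h1, hSw⟩, h2', ⟨h3, by
          simp only [Finset.mem_insert]
          push_neg
          exact ⟨hwv, hSw⟩⟩⟩
      · rintro hS
        obtain ⟨⟨h1, h1w⟩, h2', h3, h3w⟩ := mem_link.1 hS
        exact ⟨mem_link.2 ⟨h1, h2', h3⟩, h1w⟩
    have hKwbound : ∀ S ∈ cxLink Kw {v}, S.card ≤ d + 1 := by
      intro S hS
      obtain ⟨h1, h2', h3⟩ := mem_link.1 hS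
      have := hb _ h3.1
      rwa [Finset.card_insert_of_notMem h2', Nat.add_le_add_iff_right] at this
    have hKwLfacet : ∀ S ∈ cxLink Kw {v}, ∃ F ∈ cxLink Kw {v}, S ⊆ F ∧ F.card = d + 1 := by
      intro S hS
      obtain ⟨h1, h2', h3⟩ := mem_link.1 hS
      obtain ⟨F, hF, hsub, hcard⟩ := hKwfacet _ h3
      have hvF : v ∈ F := hsub (Finset.mem_insert_self v S)
      refine ⟨F.erase v, mem_link.2 ⟨hKwC.2 F hF _ (Finset.erase_subset v F),
        Finset.notMem_erase v F, by rwa [Finset.insert_erase hvF]⟩, ?_, ?_⟩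
      · exact Finset.subset_erase.2 ⟨(Finset.subset_insert v S).trans hsub, h2'⟩
      · rw [Finset.card_erase_of_mem hvF, hcard]
        rfl
    constructor
    · -- IsCM of L minus w
      rw [hsetid]
      constructor
      · intro S hS
        obtain ⟨F, hF, hsub, hcard⟩ := hKwLfacet S hS
        exact ⟨F, hF, hsub, fun G hG => hcard ▸ hKwbound G hG⟩
      · intro T hT n hside
        have hvT : v ∉ T := (mem_link.1 hT).2.1
        have hTv : insert v T ∈ Kw := (mem_link.1 hT).2.2
        rw [link_link hKwC hvT, union_singleton] at hside ⊢
        exact hKw.2 (insert v T) hTv n hside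
    · -- every face of L is within a w-free facet of L
      intro S hS
      obtain ⟨F₁, hF₁, _, hcF₁⟩ := hKwLfacet ∅ (isComplex_link hKwC v hvKw).1
      have hF₁' : F₁ ∈ {S | S ∈ L ∧ w ∉ S} := by rw [hsetid]; exact hF₁
      exact ⟨F₁, hF₁'.1, hF₁'.2, by rw [hcF₁]; exact hbound S hS⟩

lemma chain_on_link_avoids {K : Set (Finset V)} {v : V} {n : ℕ} {y : Finset V → k}
    (hy : IsChainOn k (cxLink K {v}) n y) : ∀ T, v ∈ T → y T = 0 := by
  intro T hvT
  by_contra h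
  exact (mem_link.1 (hy T h).1).2.1 hvT

lemma extend {K : Set (Finset V)} {d : ℕ} (h : Hyp k K (d + 1)) {v : V}
    (hv : ({v} : Finset V) ∈ K) (y : Finset V → k)
    (hy : IsChainOn k (cxLink K {v}) (d + 1) y) (hcy : bdry y = 0) :
    ∃ z : Finset V → k, IsChainOn k K (d + 2) z ∧ bdry z = 0 ∧ deCone k v z = y ∧
      ∀ T, v ∈ T → z T = cone k v y T := by
  obtain ⟨hK, hb, hex, h2⟩ := h
  have hyv : ∀ T, v ∈ T → y T = 0 := chain_on_link_avoids k hy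
  have hbx : bdry (cone k v y) = y := bdry_cone k v y hyv hcy
  obtain ⟨hKv, hszv⟩ := h2.2 v hv
  set Kv := {S | S ∈ K ∧ v ∉ S} with hKvdef
  -- Kv has large faces
  obtain ⟨S₀, hS₀, hc₀⟩ := hex
  obtain ⟨F₀, hF₀, hvF₀, hcF₀⟩ := hszv S₀ hS₀
  have hcF₀' : d + 1 < F₀.card := by
    have := hc₀ ▸ hcF₀
    omega
  -- homology vanishing for Kv in degree d+1
  have hhom : HomologyVanishes k Kv (d + 1) := by
    have hmem : (∅ : Finset V) ∈ Kv := ⟨hK.1, Finset.notMem_empty v⟩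
    have := hKv.2 ∅ hmem (d + 1) (by
      rw [link_empty]
      exact ⟨F₀, ⟨hF₀, hvF₀⟩, hcF₀'⟩)
    rwa [link_empty] at this
  have hychain : IsChainOn k Kv (d + 1) y := by
    intro T hT
    obtain ⟨hT1, hT2⟩ := hy T hT
    obtain ⟨h1, h2', _⟩ := mem_link.1 hT1
    exact ⟨⟨h1, h2'⟩, hT2⟩
  obtain ⟨b, hbchain, hbb⟩ := hhom y hychain hcy
  have hbv : ∀ T, v ∈ T → b T = 0 := by
    intro T hvT
    by_contra hne
    exact (hbchain T hne).1.2 hvT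
  refine ⟨cone k v y - b, ?_, ?_, ?_, ?_⟩
  · -- chain on K of cards d+2
    intro T hT
    by_cases hx : cone k v y T ≠ 0
    · have hvT : v ∈ T := by
        by_contra hvT
        exact hx (by simp [cone, hvT])
    
      have hyT : y (T.erase v) ≠ 0 := by
        intro h0
        exact hx (by simp [cone, h0])
      obtain ⟨hTl, hTc⟩ := hy _ hyT
      obtain ⟨_, _, h3⟩ := mem_link.1 hTl
      rw [Finset.insert_erase hvT] at h3
      refine ⟨h3, ?_⟩
      have := Finset.card_erase_of_mem hvT
      omega
    · push_neg at hx
      have hbT : b T ≠ 0 := by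
        intro h0
        apply hT
        show cone k v y T - b T = 0
        rw [hx, h0, sub_zero]
      exact ⟨(hbchain T hbT).1.1, (hbchain T hbT).2⟩
  · rw [bdry_sub, hbx, hbb, sub_self]
  · -- deCone of z is y
    funext S
    by_cases hvS : v ∈ S
    · show (if v ∈ S then 0 else _) = y S
      rw [if_pos hvS, hyv S hvS]
    · show (if v ∈ S then 0 else signOf v (insert v S) • (cone k v y - b) (insert v S)) = y S
      rw [if_neg hvS]
      have : (cone k v y - b) (insert v S) = cone k v y (insert v S) := by
        show cone k v y (insert v S) - b (insert v S) = _
        rw [hbv _ (Finset.mem_insert_self v S), sub_zero]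
      rw [this]
      show signOf v (insert v S) • (if v ∈ insert v S then
          signOf v (insert v S) • y ((insert v S).erase v) else 0) = y S
      rw [if_pos (Finset.mem_insert_self v S), Finset.erase_insert hvS, signOf_smul_smul]
  · intro T hvT
    show cone k v y T - b T = cone k v y T
    rw [hbv T hvT, sub_zero]

/-- The `0`-cycle `δ_a - δ_b`. -/
def pairChain (a b : V) : Finset V → k :=
  fun T => if T = {a} then 1 else if T = {b} then -1 else 0

lemma pairChain_singleton (a b t : V) (hab : a ≠ b) :
    pairChain k a b {t} = (if t = a then (1:k) else 0) + (if t = b then (-1:k) else 0) := by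
  unfold pairChain
  simp only [Finset.singleton_inj]
  rcases eq_or_ne t a with rfl | h
  · rw [if_pos rfl, if_pos rfl, if_neg hab, add_zero]
  · rw [if_neg h, if_neg h, zero_add]

lemma pairChain_cycle (a b : V) (hab : a ≠ b) : bdry (pairChain k a b) = 0 := by
  funext S
  show bdry (pairChain k a b) S = (0:k)
  rcases Finset.eq_empty_or_nonempty S with rfl | hne
  · rw [bdry_empty]
    rw [Finset.sum_congr rfl fun t _ => pairChain_singleton k a b t hab, Finset.sum_add_distrib,
      Finset.sum_ite_eq' Finset.univ a (fun _ => (1:k)),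
      Finset.sum_ite_eq' Finset.univ b (fun _ => (-1:k))]
    simp
  · rw [bdry_apply]
    refine Finset.sum_eq_zero fun t ht => ?_
    have hcard : (insert t S).card ≠ 1 := by
      rw [Finset.card_insert_of_notMem (Finset.mem_compl.1 ht)]
      have := Finset.card_pos.2 hne
      omega
    have : pairChain k a b (insert t S) = 0 := by
      unfold pairChain
      rw [if_neg (fun h => hcard (by rw [h]; simp)), if_neg (fun h => hcard (by rw [h]; simp))]
    rw [this, smul_zero]

lemma pairChain_chainOn {K : Set (Finset V)} {a b : V} (ha : ({a} : Finset V) ∈ K)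
    (hb : ({b} : Finset V) ∈ K) : IsChainOn k K 1 (pairChain k a b) := by
  intro T hT
  unfold pairChain at hT
  by_cases h1 : T = {a}
  · subst h1; exact ⟨ha, Finset.card_singleton a⟩
  · rw [if_neg h1] at hT
    by_cases h2 : T = {b}
    · subst h2; exact ⟨hb, Finset.card_singleton b⟩
    · rw [if_neg h2] at hT
      exact absurd rfl hT

lemma indicator_ne {A : Set (Finset V)} {z : Finset V → k} {T : Finset V}
    (h : A.indicator z T ≠ 0) : T ∈ A ∧ z T ≠ 0 := by
  by_cases hT : T ∈ A
  · rw [Set.indicator_of_mem hT] at h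
    exact ⟨hT, h⟩
  · rw [Set.indicator_of_notMem hT] at h
    exact absurd rfl h

lemma indicator_chainOn {K A : Set (Finset V)} {n : ℕ} {z : Finset V → k}
    (hz : IsChainOn k K n z) : IsChainOn k K n (A.indicator z) :=
  fun T hT => hz T (indicator_ne k hT).2

lemma deCone_chainOn {K : Set (Finset V)} {v : V} {n : ℕ} {z : Finset V → k}
    (hK : IsComplex K) (hz : IsChainOn k K (n + 1) z) :
    IsChainOn k (cxLink K {v}) n (deCone k v z) := by
  intro S hS
  have hvS : v ∉ S := by
    intro hv
    exact hS (by simp [deCone, hv])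
  have hz' : z (insert v S) ≠ 0 := by
    intro h0
    exact hS (by simp [deCone, hvS, h0])
  obtain ⟨hmem, hcard⟩ := hz _ hz'
  have hcS : S.card = n := by
    rw [Finset.card_insert_of_notMem hvS] at hcard
    omega
  exact ⟨mem_link.2 ⟨hK.2 _ hmem _ (Finset.subset_insert v S), hvS, hmem⟩, hcS⟩

lemma deCone_apply_erase {v : V} (z : Finset V → k) {T : Finset V} (hvT : v ∈ T) :
    deCone k v z (T.erase v) = signOf v T • z T := by
  show (if v ∈ T.erase v then 0 else
    signOf v (insert v (T.erase v)) • z (insert v (T.erase v))) = _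
  rw [if_neg (Finset.notMem_erase v T), Finset.insert_erase hvT]

/-- The key induction: in a `d`-dimensional 2-CM complex, (i) every facet supports a
cycle, and (ii) there is no nontrivial restriction-closed splitting of the cycle space. -/
theorem key (d : ℕ) (K : Set (Finset V)) (h : Hyp k K d) :
    (∀ F ∈ K, F.card = d + 1 →
      ∃ z : Finset V → k, IsChainOn k K (d + 1) z ∧ bdry z = 0 ∧ z F ≠ 0) ∧
    (∀ A : Set (Finset V),
      (∀ z : Finset V → k, IsChainOn k K (d + 1) z → bdry z = 0 → bdry (A.indicator z) = 0) →
      (∀ z : Finset V → k, IsChainOn k K (d + 1) z → bdry z = 0 → A.indicator z = 0) ∨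
      (∀ z : Finset V → k, IsChainOn k K (d + 1) z → bdry z = 0 → A.indicator z = z)) := by
  induction d generalizing K with
  | zero =>
    have hK := h.1
    have h2 := h.2.2.2
    have part1 : ∀ F ∈ K, F.card = 0 + 1 →
        ∃ z : Finset V → k, IsChainOn k K (0 + 1) z ∧ bdry z = 0 ∧ z F ≠ 0 := by
      intro F hF hcF
      obtain ⟨u, rfl⟩ := Finset.card_eq_one.1 hcF
      obtain ⟨F', hF', huF', hcF'⟩ := (h2.2 u hF).2 {u} hF
      have hpos : 0 < F'.card := lt_of_lt_of_le Nat.one_pos (by simpa using hcF')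
      obtain ⟨w, hwF'⟩ := Finset.card_pos.1 hpos
      have hwu : w ≠ u := fun hh => huF' (hh ▸ hwF')
      have hwK : ({w} : Finset V) ∈ K := hK.2 F' hF' {w} (Finset.singleton_subset_iff.2 hwF')
      refine ⟨pairChain k u w, pairChain_chainOn k hF hwK,
        pairChain_cycle k u w (Ne.symm hwu), ?_⟩
      unfold pairChain
      rw [if_pos rfl]
      exact one_ne_zero
    refine ⟨part1, ?_⟩
    intro A hA
    by_cases hc1 : ∀ z : Finset V → k, IsChainOn k K (0 + 1) z → bdry z = 0 → A.indicator z = 0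
    · exact Or.inl hc1
    · right
      push_neg at hc1
      obtain ⟨z₀, hz₀c, hz₀b, hz₀⟩ := hc1
      have : ∃ T, A.indicator z₀ T ≠ 0 := by
        by_contra hno
        push_neg at hno
        exact hz₀ (funext fun T => hno T)
      obtain ⟨Ta, hTa⟩ := this
      obtain ⟨hTaA, hz₀Ta⟩ := indicator_ne k hTa
      obtain ⟨hTaK, hTac⟩ := hz₀c Ta hz₀Ta
      obtain ⟨a, rfl⟩ := Finset.card_eq_one.1 hTac
      intro z hzc hzb
      funext T
      by_cases hTA : T ∈ A
      · rw [Set.indicator_of_mem hTA]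
      · rw [Set.indicator_of_notMem hTA]
        by_contra h0
        have hzT : z T ≠ 0 := fun hh => h0 hh.symm
        obtain ⟨hTK, hTc⟩ := hzc T hzT
        obtain ⟨b, rfl⟩ := Finset.card_eq_one.1 hTc
        have hab : a ≠ b := fun hh => hTA (hh ▸ hTaA)
        have hcyc := hA (pairChain k a b) (pairChain_chainOn k hTaK hTK)
          (pairChain_cycle k a b hab)
        have he := congrFun hcyc ∅
        rw [bdry_empty] at he
        have hval : ∀ t : V, A.indicator (pairChain k a b) {t} = if t = a then (1:k) else 0 := by
          intro t
          rcases eq_or_ne t a with rfl | hta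
          · rw [if_pos rfl, Set.indicator_of_mem hTaA]
            unfold pairChain
            rw [if_pos rfl]
          · rw [if_neg hta]
            rcases eq_or_ne t b with rfl | htb
            · rw [Set.indicator_of_notMem hTA]
            · have hpc : pairChain k a b {t} = 0 := by
                unfold pairChain
                rw [if_neg (by simpa [Finset.singleton_inj] using hta),
                  if_neg (by simpa [Finset.singleton_inj] using htb)]
              by_cases hmem : ({t} : Finset V) ∈ A
              · rw [Set.indicator_of_mem hmem, hpc]
              · rw [Set.indicator_of_notMem hmem]
        rw [Finset.sum_congr rfl (fun t _ => hval t),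
          Finset.sum_ite_eq' Finset.univ a (fun _ => (1:k))] at he
        simp at he
  | succ d ih =>
    have hK := h.1
    have hb := h.2.1
    have hex := h.2.2.1
    have h2 := h.2.2.2
    have hvK : ∀ {T : Finset V}, T ∈ K → ∀ {v : V}, v ∈ T → ({v} : Finset V) ∈ K :=
      fun {T} hT {v} hv => hK.2 _ hT _ (Finset.singleton_subset_iff.2 hv)
    have part1 : ∀ F ∈ K, F.card = d + 1 + 1 →
        ∃ z : Finset V → k, IsChainOn k K (d + 1 + 1) z ∧ bdry z = 0 ∧ z F ≠ 0 := by
      intro F hF hcF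
      have hFne : F.Nonempty := Finset.card_pos.1 (by omega)
      obtain ⟨v, hvF⟩ := hFne
      have hv : ({v} : Finset V) ∈ K := hvK hF hvF
      have hFe : F.erase v ∈ cxLink K {v} := mem_link.2 ⟨hK.2 F hF _ (Finset.erase_subset v F),
        Finset.notMem_erase v F, by rwa [Finset.insert_erase hvF]⟩
      have hFec : (F.erase v).card = d + 1 := by
        rw [Finset.card_erase_of_mem hvF, hcF]
        rfl
      obtain ⟨y, hyc, hyb, hyF⟩ := (ih _ (link_hyp k h hv)).1 (F.erase v) hFe hFec
      obtain ⟨z, hzc, hzb, hdz, hzcone⟩ := extend k h hv y hyc hyb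
      refine ⟨z, hzc, hzb, ?_⟩
      rw [hzcone F hvF]
      show (if v ∈ F then signOf v F • y (F.erase v) else 0) ≠ 0
      rw [if_pos hvF]
      exact signOf_smul_ne_zero k v F _ hyF
    refine ⟨part1, ?_⟩
    intro A hA
    by_cases hc1 : ∀ z : Finset V → k, IsChainOn k K (d + 1 + 1) z → bdry z = 0 →
      A.indicator z = 0
    · exact Or.inl hc1
    · right
      push_neg at hc1
      obtain ⟨z₀, hz₀c, hz₀b, hz₀⟩ := hc1
      have : ∃ T, A.indicator z₀ T ≠ 0 := by
        by_contra hno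
        push_neg at hno
        exact hz₀ (funext fun T => hno T)
      obtain ⟨Ta, hTa⟩ := this
      obtain ⟨hTaA, hz₀Ta⟩ := indicator_ne k hTa
      obtain ⟨hTaK, hTac⟩ := hz₀c Ta hz₀Ta
      intro z hzc hzb
      funext T
      by_cases hTA : T ∈ A
      · rw [Set.indicator_of_mem hTA]
      · rw [Set.indicator_of_notMem hTA]
        by_contra h0
        have hzT : z T ≠ 0 := fun hh => h0 hh.symm
        obtain ⟨hTK, hTc⟩ := hzc T hzT
        exfalso
        set sideA : V → Prop := fun v => ∀ y : Finset V → k,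
          IsChainOn k (cxLink K {v}) (d + 1) y → bdry y = 0 →
            ((fun S => insert v S) ⁻¹' A).indicator y = y with hsideA
        have hdicho : ∀ v, ({v} : Finset V) ∈ K →
            (∀ y : Finset V → k, IsChainOn k (cxLink K {v}) (d + 1) y → bdry y = 0 →
              ((fun S => insert v S) ⁻¹' A).indicator y = 0) ∨ sideA v := by
          intro v hv
          refine (ih _ (link_hyp k h hv)).2 _ ?_
          intro y hyc hyb
          obtain ⟨zz, hzzc, hzzb, hdz, _⟩ := extend k h hv y hyc hyb
          have h1 : bdry (A.indicator zz) = 0 := hA zz hzzc hzzb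
          have h2' := bdry_deCone k v _ h1
          rwa [deCone_indicator, hdz] at h2'
        have hAside : ∀ F, F ∈ K → F.card = d + 1 + 1 → F ∈ A → ∀ v ∈ F, sideA v := by
          intro F hF hFc hFA v hvF
          rcases hdicho v (hvK hF hvF) with hB | hGood
          · exfalso
            obtain ⟨zf, hzfc, hzfb, hzfF⟩ := part1 F hF hFc
            have hy := hB (deCone k v zf) (deCone_chainOn k hK hzfc) (bdry_deCone k v zf hzfb)
            have hy' := congrFun hy (F.erase v)
            rw [Set.indicator_of_mem (show F.erase v ∈ (fun S => insert v S) ⁻¹' A by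
              show insert v (F.erase v) ∈ A
              rwa [Finset.insert_erase hvF])] at hy'
            rw [deCone_apply_erase k zf hvF] at hy'
            exact signOf_smul_ne_zero k v F _ hzfF (by simpa using hy')
          · exact hGood
        have hBside : ∀ F, F ∈ K → F.card = d + 1 + 1 → F ∉ A → ∀ v ∈ F, ¬ sideA v := by
          intro F hF hFc hFA v hvF hside
          obtain ⟨zf, hzfc, hzfb, hzfF⟩ := part1 F hF hFc
          have hy := hside (deCone k v zf) (deCone_chainOn k hK hzfc) (bdry_deCone k v zf hzfb)
          have hne := signOf_smul_ne_zero k v F (zf F) hzfF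
          rw [← deCone_apply_erase k zf hvF] at hne
          have hy' := congrFun hy (F.erase v)
          by_cases hmem : F.erase v ∈ (fun S => insert v S) ⁻¹' A
          · apply hFA
            have : insert v (F.erase v) ∈ A := hmem
            rwa [Finset.insert_erase hvF] at this
          · rw [Set.indicator_of_notMem hmem] at hy'
            exact hne hy'.symm
        obtain ⟨a, haTa⟩ := Finset.card_pos.1 (show 0 < Ta.card by omega)
        obtain ⟨b, hbT⟩ := Finset.card_pos.1 (show 0 < T.card by omega)
        have hsa : sideA a := hAside Ta hTaK hTac hTaA a haTa
        have hsb : ¬ sideA b := hBside T hTK hTc hTA b hbT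
        have hab : a ≠ b := fun hh => hsb (hh ▸ hsa)
        have haK : ({a} : Finset V) ∈ K := hvK hTaK haTa
        have hbK : ({b} : Finset V) ∈ K := hvK hTK hbT
        have hhom1 : HomologyVanishes k K 1 := by
          obtain ⟨S₀, hS₀, hc₀⟩ := hex
          have hside : ∃ F ∈ cxLink K ∅, 1 < F.card := by
            rw [link_empty]
            exact ⟨S₀, hS₀, by omega⟩
          have := h2.1.2 ∅ hK.1 1 hside
          rwa [link_empty] at this
        obtain ⟨e, hec, heb⟩ := hhom1 (pairChain k a b) (pairChain_chainOn k haK hbK)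
          (pairChain_cycle k a b hab)
        set E : Set (Finset V) := {T | ∀ u ∈ T, sideA u} with hE
        have hEmem : ∀ {T : Finset V}, T ∈ E ↔ ∀ u ∈ T, sideA u := fun {T} => Iff.rfl
        have hkey : bdry (E.indicator e) = (fun T => if T = ({a} : Finset V) then (1:k) else 0) := by
          funext S
          by_cases hcS : S.card = 1
          · obtain ⟨u, rfl⟩ := Finset.card_eq_one.1 hcS
            by_cases huA : sideA u
            · have heq : bdry (E.indicator e) {u} = bdry e {u} := by
                rw [bdry_apply, bdry_apply]
                refine Finset.sum_congr rfl fun t ht => ?_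
                congr 1
                by_cases heT : e (insert t {u}) = 0
                · by_cases hmem : insert t {u} ∈ E
                  · rw [Set.indicator_of_mem hmem]
                  · rw [Set.indicator_of_notMem hmem, heT]
                · obtain ⟨hTK', hTc'⟩ := hec _ heT
                  obtain ⟨F, hFK, hsub, hFc⟩ := exists_facet k h hTK'
                  by_cases hFA : F ∈ A
                  · exact Set.indicator_of_mem
                      (hEmem.2 (fun u' hu' => hAside F hFK hFc hFA u' (hsub hu'))) e
                  · exact absurd huA (hBside F hFK hFc hFA u (hsub (by simp)))
              rw [heq]
              have hcf := congrFun heb {u}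
              rw [hcf, pairChain_singleton k a b u hab]
              have hub : u ≠ b := fun hh => hsb (hh ▸ huA)
              rw [if_neg hub, add_zero]
              simp only [Finset.singleton_inj]
            · have h00 : bdry (E.indicator e) {u} = 0 := by
                rw [bdry_apply]
                refine Finset.sum_eq_zero fun t ht => ?_
                rw [Set.indicator_of_notMem
                  (fun hmem => huA (hEmem.1 hmem u (by simp))), smul_zero]
              rw [h00, if_neg (fun hh : ({u} : Finset V) = {a} =>
                huA (by rw [Finset.singleton_inj.1 hh]; exact hsa))]
          · have h00 : bdry (E.indicator e) S = 0 := by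
              rw [bdry_apply]
              refine Finset.sum_eq_zero fun t ht => ?_
              by_cases hmem : insert t S ∈ E
              · rw [Set.indicator_of_mem hmem]
                by_cases he0 : e (insert t S) = 0
                · rw [he0, smul_zero]
                · exfalso
                  have hcc := (hec _ he0).2
                  rw [Finset.card_insert_of_notMem (Finset.mem_compl.1 ht)] at hcc
                  omega
              · rw [Set.indicator_of_notMem hmem, smul_zero]
            rw [h00, if_neg (fun hh : S = {a} => hcS (by rw [hh]; simp))]
        have hdd := bdry_bdry (E.indicator e)
        have h1 := congrFun hdd ∅
        rw [hkey, bdry_empty] at h1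
        have hsimp : ∀ t : V, (if ({t} : Finset V) = {a} then (1:k) else 0)
            = if t = a then (1:k) else 0 := fun t => by simp [Finset.singleton_inj]
        rw [Finset.sum_congr rfl (fun t _ => hsimp t),
          Finset.sum_ite_eq' Finset.univ a (fun _ => (1:k))] at h1
        simp at h1

lemma bdry_finsum {ι : Type*} (s : Finset ι) (f : ι → Finset V → k) :
    bdry (∑ i ∈ s, f i) = ∑ i ∈ s, bdry (f i) := by
  classical
  induction s using Finset.cons_induction with
  | empty => simpa using bdry_zero (V := V) (M := k)
  | cons a s ha ihs =>
    rw [Finset.sum_cons, Finset.sum_cons, bdry_add, ihs]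

/-- The space of cycles of `K` in cardinality `n`, as a submodule of all chains. -/
def cycSub (K : Set (Finset V)) (n : ℕ) : Submodule k (Finset V → k) where
  carrier := {z | IsChainOn k K n z ∧ bdry z = 0}
  add_mem' := by
    rintro a b ⟨ha1, ha2⟩ ⟨hb1, hb2⟩
    refine ⟨fun T hT => ?_, by rw [bdry_add, ha2, hb2, add_zero]⟩
    by_cases haT : a T = 0
    · refine hb1 T fun hbT => hT ?_
      show a T + b T = 0
      rw [haT, hbT, add_zero]
    · exact ha1 T haT
  zero_mem' := ⟨fun T hT => absurd rfl hT, bdry_zero⟩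
  smul_mem' := by
    rintro r z ⟨h1, h2⟩
    refine ⟨fun T hT => h1 T fun hzT => hT ?_, by rw [bdry_smul, h2, smul_zero]⟩
    show r • z T = 0
    rw [hzT, smul_zero]

lemma mem_cycSub {K : Set (Finset V)} {n : ℕ} {z : Finset V → k} :
    z ∈ cycSub k K n ↔ IsChainOn k K n z ∧ bdry z = 0 := Iff.rfl

end Aux

/-- Every `d`-dimensional doubly Cohen–Macaulay complex `K` over
a field `k` (`d ≥ 1`) is a minimal `d`-cycle complex over the abelian group `k^m`
for some `m ≥ 1`: there is a minimal cycle `c` on cardinality-`(d+1)` sets with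
coefficients in `Fin m → k` whose support spans `K`. -/
theorem two_CM_is_minimal_cycle_complex
    {V : Type*} [Fintype V] [LinearOrder V] (k : Type*) [Field k]
    (d : ℕ) (hd : 1 ≤ d) (K : Set (Finset V))
    (hK : IsComplex K)
    (hdim : (∀ S ∈ K, S.card ≤ d + 1) ∧ ∃ S ∈ K, S.card = d + 1)
    (h2cm : Is2CM k K) :
    ∃ m : ℕ, 1 ≤ m ∧ ∃ c : Finset V → (Fin m → k),
      IsMinimalCycle (d + 1) c ∧ K = spannedComplex c := by
  classical
  have h : Hyp k K d := ⟨hK, hdim.1, hdim.2, h2cm⟩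
  obtain ⟨part1, part2⟩ := key k d K h
  set Z : Submodule k (Finset V → k) := cycSub k K (d + 1) with hZ
  set m : ℕ := Module.finrank k Z with hm
  set bas : Module.Basis (Fin m) k Z := Module.finBasis k Z with hbas
  set c : Finset V → (Fin m → k) := fun T i => (bas i : Finset V → k) T with hc
  -- representation of elements of Z
  have hrepr : ∀ (z : Z) (T : Finset V),
      (z : Finset V → k) T = ∑ i, bas.repr z i * (bas i : Finset V → k) T := by
    intro z T
    conv_lhs => rw [← bas.sum_repr z]
    rw [Submodule.coe_sum]
    rw [Finset.sum_apply]
    refine Finset.sum_congr rfl fun i _ => ?_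
    rfl
  have hreprfun : ∀ z : Z, (z : Finset V → k) = ∑ i, bas.repr z i • (bas i : Finset V → k) := by
    intro z
    funext T
    rw [hrepr z T, Finset.sum_apply]
    rfl
  have hbasP : ∀ i : Fin m, IsChainOn k K (d + 1) ((bas i : Z) : Finset V → k) ∧
      bdry ((bas i : Z) : Finset V → k) = 0 := fun i => (mem_cycSub k).1 (bas i).2
  -- facets support the chain c
  have hsupp : ∀ F, F ∈ K → F.card = d + 1 → c F ≠ 0 := by
    intro F hF hcF h0
    obtain ⟨z, hzc, hzb, hzF⟩ := part1 F hF hcF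
    apply hzF
    have hmem : z ∈ Z := (mem_cycSub k).2 ⟨hzc, hzb⟩
    have h1 : z F = ∑ i, bas.repr ⟨z, hmem⟩ i * (bas i : Finset V → k) F := hrepr ⟨z, hmem⟩ F
    rw [h1]
    refine Finset.sum_eq_zero fun i _ => ?_
    have h2 : (bas i : Finset V → k) F = 0 := congrFun h0 i
    rw [h2, mul_zero]
  obtain ⟨S₀, hS₀, hc₀⟩ := hdim.2
  -- m ≥ 1
  have hm1 : 1 ≤ m := by
    obtain ⟨z, hzc, hzb, hzF⟩ := part1 S₀ hS₀ hc₀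
    have hmem : z ∈ Z := (mem_cycSub k).2 ⟨hzc, hzb⟩
    have hne : (⟨z, hmem⟩ : Z) ≠ 0 := by
      intro hzero
      apply hzF
      have : z = (0 : Finset V → k) := congrArg Subtype.val hzero
      rw [this]
      rfl
    have : Nontrivial Z := ⟨⟨z, hmem⟩, 0, hne⟩
    exact Module.finrank_pos
  refine ⟨m, hm1, c, ⟨?_, ?_, ?_, ?_⟩, ?_⟩
  · -- c ≠ 0
    intro h0
    exact hsupp S₀ hS₀ hc₀ (congrFun h0 S₀)
  · -- IsSimpChain
    intro T hT
    obtain ⟨i, hi⟩ := Function.ne_iff.1 hT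
    exact ((hbasP i).1 T hi).2
  · -- bdry c = 0
    funext S
    funext i
    have h1 := congrFun (bdry_pi k c i) S
    have h3 : bdry (fun T => c T i) = 0 := (hbasP i).2
    show bdry c S i = (0 : Finset V → Fin m → k) S i
    rw [← h1, h3]
    rfl
  · -- minimality
    intro c' hsub hbc'
    set A : Set (Finset V) := {T | c' T ≠ 0} with hA
    have hcoord : ∀ i : Fin m, A.indicator ((bas i : Z) : Finset V → k) = fun T => c' T i := by
      intro i
      funext T
      by_cases hT : T ∈ A
      · rw [Set.indicator_of_mem hT]
        have : c' T = c T := by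
          rcases hsub T with h1 | h1
          · exact h1
          · exact absurd h1 hT
        rw [this]
      · rw [Set.indicator_of_notMem hT]
        have : c' T = 0 := not_not.1 fun hne => hT hne
        rw [this]
        rfl
    have hAhyp : ∀ z : Finset V → k, IsChainOn k K (d + 1) z → bdry z = 0 →
        bdry (A.indicator z) = 0 := by
      intro z hzc hzb
      have hmem : z ∈ Z := (mem_cycSub k).2 ⟨hzc, hzb⟩
      have hind : A.indicator z
          = ∑ i, bas.repr ⟨z, hmem⟩ i • A.indicator ((bas i : Z) : Finset V → k) := by
        funext T
        rw [Finset.sum_apply]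
        by_cases hT : T ∈ A
        · rw [Set.indicator_of_mem hT]
          have : z T = ∑ i, bas.repr ⟨z, hmem⟩ i * (bas i : Finset V → k) T :=
            hrepr ⟨z, hmem⟩ T
          rw [this]
          refine Finset.sum_congr rfl fun i _ => ?_
          show _ = bas.repr ⟨z, hmem⟩ i • A.indicator ((bas i : Z) : Finset V → k) T
          rw [Set.indicator_of_mem hT]
          rfl
        · rw [Set.indicator_of_notMem hT]
          symm
          refine Finset.sum_eq_zero fun i _ => ?_
          show bas.repr ⟨z, hmem⟩ i • A.indicator ((bas i : Z) : Finset V → k) T = 0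
          rw [Set.indicator_of_notMem hT, smul_zero]
      rw [hind, bdry_finsum]
      refine Finset.sum_eq_zero fun i _ => ?_
      rw [bdry_smul, hcoord i]
      have : bdry (fun T => c' T i) = fun S => bdry c' S i := bdry_pi k c' i
      rw [this, hbc']
      show (bas.repr ⟨z, hmem⟩ i • fun S => (0 : Finset V → (Fin m → k)) S i) = 0
      funext S
      show bas.repr ⟨z, hmem⟩ i • (0 : k) = 0
      rw [smul_zero]
    rcases part2 A hAhyp with hcase | hcase
    · left
      funext T
      funext i
      have := congrFun (hcase ((bas i : Z) : Finset V → k) (hbasP i).1 (hbasP i).2) T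
      rw [congrFun (hcoord i) T] at this
      exact this
    · right
      funext T
      funext i
      have := congrFun (hcase ((bas i : Z) : Finset V → k) (hbasP i).1 (hbasP i).2) T
      rw [congrFun (hcoord i) T] at this
      exact this
  · -- spanned complex
    ext S
    constructor
    · intro hS
      obtain ⟨F, hF, hSF, hFc⟩ := exists_facet k h hS
      exact ⟨F, hsupp F hF hFc, hSF⟩
    · rintro ⟨T, hcT, hST⟩
      obtain ⟨i, hi⟩ := Function.ne_iff.1 hcT
      exact hK.2 T ((hbasP i).1 T hi).1 S hST

end Paper2CM
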